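/- arXiv:math/0112078 — 6 statements merged into one kernel-verified Lean document; each statement's English description precedes it below -/
import Mathlib

section
/- Define f₊(x,y,λ) = (1/2)·[xy + √(4λ² + (4−x²)(4−y²))] and f₋(x,y,λ) = (1/2)·[xy − √(4λ² + (4−x²)(4−y²))]. For λ ≥ 4 and −2 ≤ x, y ≤ 2, the partial derivatives satisfy |∂f₊/∂x| ≤ 1, |∂f₊/∂y| ≤ 1, |∂f₋/∂x| ≤ 1, and |∂f₋/∂y| ≤ 1. -/
noncomputable def fPlus (x y lam : ℝ) : ℝ :=
  (1 / 2) * (x * y + Real.sqrt (4 * lam ^ 2 + (4 - x ^ 2) * (4 - y ^ 2)))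

noncomputable def fMinus (x y lam : ℝ) : ℝ :=
  (1 / 2) * (x * y - Real.sqrt (4 * lam ^ 2 + (4 - x ^ 2) * (4 - y ^ 2)))

lemma hasDerivAt_aux (x y lam ε : ℝ)
    (hS : 0 < 4 * lam ^ 2 + (4 - x ^ 2) * (4 - y ^ 2)) :
    HasDerivAt (fun t => (1 / 2) * (t * y + ε * Real.sqrt (4 * lam ^ 2 + (4 - t ^ 2) * (4 - y ^ 2))))
      ((1 / 2) * (y + ε * ((-(2 * x) * (4 - y ^ 2)) /
        (2 * Real.sqrt (4 * lam ^ 2 + (4 - x ^ 2) * (4 - y ^ 2)))))) x := by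
  have h1 : HasDerivAt (fun t : ℝ => t ^ 2) (2 * x) x := by simpa using hasDerivAt_pow 2 x
  have hg : HasDerivAt (fun t : ℝ => 4 * lam ^ 2 + (4 - t ^ 2) * (4 - y ^ 2))
      (-(2 * x) * (4 - y ^ 2)) x := by
    have := ((h1.const_sub 4).mul_const (4 - y ^ 2)).const_add (4 * lam ^ 2)
    convert this using 1
  have hsq := hg.sqrt (ne_of_gt hS)
  have hid : HasDerivAt (fun t : ℝ => t * y) y x := by
    simpa using (hasDerivAt_id x).mul_const y
  exact (hid.add (hsq.const_mul ε)).const_mul (1 / 2)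

lemma bound_aux (lam x y : ℝ) (hlam : 4 ≤ lam) (hx : x ^ 2 ≤ 4) (hy : y ^ 2 ≤ 4) :
    |(1 / 2) * (y - x * (4 - y ^ 2) / Real.sqrt (4 * lam ^ 2 + (4 - x ^ 2) * (4 - y ^ 2)))| ≤ 1 := by
  set S := 4 * lam ^ 2 + (4 - x ^ 2) * (4 - y ^ 2) with hSdef
  have hS64 : 64 ≤ S := by nlinarith
  set s := Real.sqrt S with hsdef
  have hs2 : s ^ 2 = S := Real.sq_sqrt (by linarith)
  have hs8 : 8 ≤ s := by
    rw [hsdef]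
    rw [show (8:ℝ) = Real.sqrt 64 by rw [show (64:ℝ) = 8^2 by norm_num, Real.sqrt_sq]; norm_num]
    exact Real.sqrt_le_sqrt (by linarith)
  have hspos : 0 < s := by linarith
  have hb : 0 ≤ 4 - y ^ 2 := by linarith
  have hxy1 : -4 ≤ x * y := by nlinarith [sq_nonneg (x + y)]
  have h1 : 0 ≤ s + x * y - 2 * x := by nlinarith [sq_nonneg x]
  have h2 : 0 ≤ s + x * y + 2 * x := by nlinarith [sq_nonneg x]
  have key : (y * s - x * (4 - y ^ 2)) ^ 2 ≤ 4 * s ^ 2 := by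
    nlinarith [mul_nonneg (mul_nonneg hb h1) h2, hs2]
  have hA1 : y * s - x * (4 - y ^ 2) ≤ 2 * s := by nlinarith
  have hA2 : -(2 * s) ≤ y * s - x * (4 - y ^ 2) := by nlinarith
  have hq : x * (4 - y ^ 2) / s * s = x * (4 - y ^ 2) :=
    div_mul_cancel₀ _ (ne_of_gt hspos)
  rw [abs_le]
  constructor
  · nlinarith [hq, hA2, hspos]
  · nlinarith [hq, hA1, hspos]

/-- Lemma 5.4: for λ ≥ 4 and x, y ∈ [−2,2], all partial derivatives of f± are
bounded by 1 in absolute value. -/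
theorem fPlusMinus_deriv_bounds
    (lam x y : ℝ) (hlam : 4 ≤ lam)
    (hx : x ∈ Set.Icc (-2 : ℝ) 2) (hy : y ∈ Set.Icc (-2 : ℝ) 2) :
    |deriv (fun t => fPlus t y lam) x| ≤ 1 ∧
    |deriv (fun t => fPlus x t lam) y| ≤ 1 ∧
    |deriv (fun t => fMinus t y lam) x| ≤ 1 ∧
    |deriv (fun t => fMinus x t lam) y| ≤ 1 := by
  obtain ⟨hx1, hx2⟩ := hx
  obtain ⟨hy1, hy2⟩ := hy
  have hxsq : x ^ 2 ≤ 4 := by nlinarith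
  have hysq : y ^ 2 ≤ 4 := by nlinarith
  have hS : 0 < 4 * lam ^ 2 + (4 - x ^ 2) * (4 - y ^ 2) := by nlinarith
  have hS' : 0 < 4 * lam ^ 2 + (4 - y ^ 2) * (4 - x ^ 2) := by nlinarith
  have hspos : 0 < Real.sqrt (4 * lam ^ 2 + (4 - x ^ 2) * (4 - y ^ 2)) :=
    Real.sqrt_pos.mpr hS
  have hspos' : 0 < Real.sqrt (4 * lam ^ 2 + (4 - y ^ 2) * (4 - x ^ 2)) :=
    Real.sqrt_pos.mpr hS'
  have hfp : ∀ ε : ℝ, (fun t => (1 / 2) * (t * y + ε * Real.sqrt (4 * lam ^ 2 + (4 - t ^ 2) * (4 - y ^ 2))))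
      = fun t => (1 / 2) * (t * y + ε * Real.sqrt (4 * lam ^ 2 + (4 - t ^ 2) * (4 - y ^ 2))) := fun _ => rfl
  refine ⟨?_, ?_, ?_, ?_⟩
  · have h := hasDerivAt_aux x y lam 1 hS
    have heq : (fun t => fPlus t y lam)
        = fun t => (1 / 2) * (t * y + 1 * Real.sqrt (4 * lam ^ 2 + (4 - t ^ 2) * (4 - y ^ 2))) := by
      funext t; simp [fPlus]
    rw [heq, h.deriv]
    have hb := bound_aux lam x y hlam hxsq hysq
    convert hb using 2
    field_simp
    ring
  · have h := hasDerivAt_aux y x lam 1 (by nlinarith)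
    have heq : (fun t => fPlus x t lam)
        = fun t => (1 / 2) * (t * x + 1 * Real.sqrt (4 * lam ^ 2 + (4 - t ^ 2) * (4 - x ^ 2))) := by
      funext t; simp only [fPlus, one_mul]
      rw [mul_comm x t, mul_comm (4 - x ^ 2) (4 - t ^ 2)]
    rw [heq, h.deriv]
    have hb := bound_aux lam y x hlam hysq hxsq
    convert hb using 2
    field_simp
    ring
  · have h := hasDerivAt_aux x y lam (-1) hS
    have heq : (fun t => fMinus t y lam)
        = fun t => (1 / 2) * (t * y + (-1) * Real.sqrt (4 * lam ^ 2 + (4 - t ^ 2) * (4 - y ^ 2))) := by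
      funext t; simp [fMinus]; ring
    rw [heq, h.deriv]
    have hb := bound_aux lam (-x) y hlam (by nlinarith) hysq
    have h4 : (4 : ℝ) - (-x) ^ 2 = 4 - x ^ 2 := by ring
    rw [h4] at hb
    convert hb using 2
    field_simp
    ring
  · have h := hasDerivAt_aux y x lam (-1) (by nlinarith)
    have heq : (fun t => fMinus x t lam)
        = fun t => (1 / 2) * (t * x + (-1) * Real.sqrt (4 * lam ^ 2 + (4 - t ^ 2) * (4 - x ^ 2))) := by
      funext t; simp only [fMinus, neg_one_mul]
      rw [mul_comm x t, mul_comm (4 - x ^ 2) (4 - t ^ 2)]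
      ring
    rw [heq, h.deriv]
    have hb := bound_aux lam (-y) x hlam (by nlinarith) hxsq
    have h4 : (4 : ℝ) - (-y) ^ 2 = 4 - y ^ 2 := by ring
    rw [h4] at hb
    convert hb using 2
    field_simp
    ring
end

section
/- Let λ ≥ 4 and suppose x, y, z ∈ ℝ satisfy the trace invariant x² + y² + z² − xyz = 4 + λ² with |x| ≤ 2 and |z| ≤ 2. Then |y| ≥ λ − 2. -/
/-- If x² + y² + z² − xyz = 4 + λ² with |x| ≤ 2, |z| ≤ 2 and λ ≥ 4, then |y| ≥ λ − 2. -/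
theorem middle_trace_large
    (lam x y z : ℝ) (hlam : 4 ≤ lam)
    (hinv : x ^ 2 + y ^ 2 + z ^ 2 - x * y * z = 4 + lam ^ 2)
    (hx : |x| ≤ 2) (hz : |z| ≤ 2) :
    lam - 2 ≤ |y| := by
  have h1 : x * y * z ≥ -(4 * |y|) := by
    have : |x * y * z| ≤ 4 * |y| := by
      rw [abs_mul, abs_mul]
      calc |x| * |y| * |z| ≤ 2 * |y| * 2 := by
            apply mul_le_mul (mul_le_mul hx le_rfl (abs_nonneg y) (by norm_num)) hz
              (abs_nonneg z) (by positivity)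
        _ = 4 * |y| := by ring
    linarith [neg_abs_le (x * y * z)]
  have h2 : y ^ 2 = |y| ^ 2 := (sq_abs y).symm
  have h3 : x ^ 2 ≤ 4 := by nlinarith [sq_abs x, sq_nonneg (|x| - 2), abs_nonneg x]
  have h4 : z ^ 2 ≤ 4 := by nlinarith [sq_abs z, sq_nonneg (|z| - 2), abs_nonneg z]
  -- (|y|+2)² ≥ λ²
  nlinarith [abs_nonneg y, sq_nonneg (|y| + 2 - lam), sq_nonneg (|y| + 2 + lam)]
end

section
/- Suppose λ > 4 and x, y, z ∈ ℝ satisfy x² + y² + z² − xyz = 4 + λ². Then it is not possible that |x| ≤ 2, |y| ≤ 2, and |z| ≤ 2 simultaneously. -/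
/-- Proposition 5.1(iii): for λ > 4, the trace invariant forbids three consecutive
traces all lying in [−2, 2]. -/
theorem no_three_small_traces
    (lam x y z : ℝ) (hlam : 4 < lam)
    (hinv : x ^ 2 + y ^ 2 + z ^ 2 - x * y * z = 4 + lam ^ 2) :
    ¬ (|x| ≤ 2 ∧ |y| ≤ 2 ∧ |z| ≤ 2) := by
  rintro ⟨hx, hy, hz⟩
  have habs : |x * y * z| ≤ 8 := by
    rw [abs_mul, abs_mul]
    calc |x| * |y| * |z| ≤ 2 * 2 * 2 := by
          gcongr <;> positivity
      _ = 8 := by norm_num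
  have hx2 : x ^ 2 ≤ 4 := by nlinarith [abs_nonneg x, sq_abs x]
  have hy2 : y ^ 2 ≤ 4 := by nlinarith [abs_nonneg y, sq_abs y]
  have hz2 : z ^ 2 ≤ 4 := by nlinarith [abs_nonneg z, sq_abs z]
  have h8 : -(x * y * z) ≤ 8 := by
    have := neg_abs_le (x * y * z); linarith
  nlinarith [hinv, hlam]
end

section
/- Let B be a 2×2 real (or complex) matrix with det B = 1. Then for every vector Ψ ∈ ℝ² (resp. ℂ²), max{ |tr B|·‖BΨ‖, ‖B²Ψ‖ } ≥ (1/2)·‖Ψ‖. -/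
/-- Sütő's lemma: for a 2×2 real matrix B with det B = 1 and any vector Ψ,
max{ |tr B|·‖BΨ‖, ‖B²Ψ‖ } ≥ ‖Ψ‖/2. -/
theorem suto_lemma
    (B : Matrix (Fin 2) (Fin 2) ℝ) (hB : B.det = 1)
    (Ψ : EuclideanSpace ℝ (Fin 2)) :
    (1 / 2) * ‖Ψ‖ ≤
      max (|B.trace| * ‖Matrix.toEuclideanLin B Ψ‖)
        ‖Matrix.toEuclideanLin (B * B) Ψ‖ := by
  have hCH : B * B = B.trace • B - 1 := by
    rw [Matrix.det_fin_two] at hB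
    ext i j
    rw [Matrix.trace_fin_two]
    fin_cases i <;> fin_cases j <;>
      simp [Matrix.mul_apply, Fin.sum_univ_two, Matrix.one_apply] <;> nlinarith
  have hlin : Matrix.toEuclideanLin (B * B) Ψ
      = B.trace • Matrix.toEuclideanLin B Ψ - Ψ := by
    rw [hCH, map_sub, map_smul]
    simp [Matrix.toEuclideanLin, Matrix.toLin'_one]
  have key : ‖Ψ‖ ≤ |B.trace| * ‖Matrix.toEuclideanLin B Ψ‖
      + ‖Matrix.toEuclideanLin (B * B) Ψ‖ := by
    have : Ψ = B.trace • Matrix.toEuclideanLin B Ψ - Matrix.toEuclideanLin (B * B) Ψ := by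
      rw [hlin]; abel
    calc ‖Ψ‖ = ‖B.trace • Matrix.toEuclideanLin B Ψ - Matrix.toEuclideanLin (B * B) Ψ‖ := by
          rw [← this]
      _ ≤ ‖B.trace • Matrix.toEuclideanLin B Ψ‖ + ‖Matrix.toEuclideanLin (B * B) Ψ‖ :=
          norm_sub_le _ _
      _ = |B.trace| * ‖Matrix.toEuclideanLin B Ψ‖ + ‖Matrix.toEuclideanLin (B * B) Ψ‖ := by
          rw [norm_smul, Real.norm_eq_abs]
  have h1 := le_max_left (|B.trace| * ‖Matrix.toEuclideanLin B Ψ‖) ‖Matrix.toEuclideanLin (B * B) Ψ‖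
  have h2 := le_max_right (|B.trace| * ‖Matrix.toEuclideanLin B Ψ‖) ‖Matrix.toEuclideanLin (B * B) Ψ‖
  linarith
end

section
/- Let B be a 2×2 matrix with det B = 1. Then for every vector Ψ, ‖BΨ‖² + ‖B²Ψ‖² > (1/(4·max(1, |tr B|²)))·‖Ψ‖², provided Ψ ≠ 0. -/
/-- Consequence (6.3) of Sütő's lemma: for det B = 1 and Ψ ≠ 0,
‖BΨ‖² + ‖B²Ψ‖² > ‖Ψ‖² / (4·max(1, |tr B|²)). -/
theorem suto_lemma_squared
    (B : Matrix (Fin 2) (Fin 2) ℝ) (hB : B.det = 1)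
    (Ψ : EuclideanSpace ℝ (Fin 2)) (hΨ : Ψ ≠ 0) :
    (1 / (4 * max 1 (|B.trace| ^ 2))) * ‖Ψ‖ ^ 2 <
      ‖Matrix.toEuclideanLin B Ψ‖ ^ 2 + ‖Matrix.toEuclideanLin (B * B) Ψ‖ ^ 2 := by
  -- Cayley–Hamilton for 2×2 with det = 1 : B² = (tr B) • B - 1
  have hdet := Matrix.det_fin_two B
  rw [hB] at hdet
  have hCH : B * B = B.trace • B - 1 := by
    ext i j
    fin_cases i <;> fin_cases j <;>
      simp [Matrix.mul_apply, Fin.sum_univ_two, Matrix.trace_fin_two,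
        Matrix.one_apply, Matrix.sub_apply, Matrix.smul_apply] <;>
      nlinarith [hdet]
  set t := B.trace with ht
  set v := Matrix.toEuclideanLin B Ψ with hv
  have hΨeq : Matrix.toEuclideanLin (B * B) Ψ = t • v - Ψ := by
    rw [hCH]
    simp [map_sub, map_smul, hv, Matrix.toEuclideanLin_eq_toLin, Matrix.toLin_one]
  have htriangle : ‖Ψ‖ ≤ |t| * ‖v‖ + ‖Matrix.toEuclideanLin (B * B) Ψ‖ := by
    have : Ψ = t • v - Matrix.toEuclideanLin (B * B) Ψ := by
      rw [hΨeq]; abel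
    calc ‖Ψ‖ = ‖t • v - Matrix.toEuclideanLin (B * B) Ψ‖ := by rw [← this]
      _ ≤ ‖t • v‖ + ‖Matrix.toEuclideanLin (B * B) Ψ‖ := norm_sub_le _ _
      _ = |t| * ‖v‖ + ‖Matrix.toEuclideanLin (B * B) Ψ‖ := by
          rw [norm_smul, Real.norm_eq_abs]
  set a := ‖v‖ with ha
  set b := ‖Matrix.toEuclideanLin (B * B) Ψ‖ with hb
  set M := max 1 (|t| ^ 2) with hM
  have hM1 : (1 : ℝ) ≤ M := le_max_left _ _
  have hM2 : |t| ^ 2 ≤ M := le_max_right _ _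
  have hM0 : (0 : ℝ) < M := lt_of_lt_of_le one_pos hM1
  have hΨpos : 0 < ‖Ψ‖ := norm_pos_iff.mpr hΨ
  have ha0 : 0 ≤ a := norm_nonneg _
  have hb0 : 0 ≤ b := norm_nonneg _
  have ht0 : 0 ≤ |t| := abs_nonneg _
  have hsq : ‖Ψ‖ ^ 2 ≤ (|t| * a + b) ^ 2 := by
    apply pow_le_pow_left₀ (norm_nonneg _) htriangle
  rw [div_mul_eq_mul_div, div_lt_iff₀ (by positivity)] at *
  nlinarith [sq_nonneg (|t| * a - b), mul_le_mul_of_nonneg_right hM2 (sq_nonneg a),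
    mul_pos hΨpos hΨpos, sq_nonneg (a + b), mul_nonneg ha0 hb0,
    mul_le_mul_of_nonneg_left hM1 (sq_nonneg b)]
end

section
/- Let V : ℤ → ℝ be the Fibonacci potential V(n) = ⌊(n+1)ω⌋ − ⌊nω⌋ with ω = (√5−1)/2, and let q_k denote the Fibonacci numbers (q₀ = q₁ = 1, q_k = q_{k−1} + q_{k−2}). Then V satisfies the substitution rule: V(q_k + n) = V(n) for all n with 1 ≤ n ≤ q_k and all k ≥ 3. -/
section Aux

variable (ω : ℝ) (q : ℕ → ℕ)

lemma fib_aux_pos (h0 : q 0 = 1) (h1 : q 1 = 1)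
    (hrec : ∀ k : ℕ, q (k + 2) = q (k + 1) + q k) : ∀ k, 1 ≤ q k := by
  have H : ∀ k, 1 ≤ q k ∧ 1 ≤ q (k+1) := by
    intro k
    induction k with
    | zero => simp [h0, h1]
    | succ n ih => exact ⟨ih.2, by rw [hrec]; omega⟩
  exact fun k => (H k).1

lemma fib_aux_det (h0 : q 0 = 1) (h1 : q 1 = 1)
    (hrec : ∀ k : ℕ, q (k + 2) = q (k + 1) + q k) :
    ∀ k : ℕ, (q (k+2) : ℤ) * q k - (q (k+1) : ℤ)^2 = (-1)^k := by
  intro k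
  induction k with
  | zero => simp [h0, h1, hrec 0]
  | succ n ih =>
    have h2 := hrec (n+1)
    have h3 := hrec n
    push_cast [h2, h3] at *
    ring_nf at ih ⊢
    nlinarith [ih]

lemma fib_aux_omega (hω : ω = (Real.sqrt 5 - 1) / 2) :
    ω^2 = 1 - ω ∧ 0 < ω ∧ ω < 1 := by
  have h5 : (Real.sqrt 5)^2 = 5 := Real.sq_sqrt (by norm_num)
  have h1 : (1:ℝ) < Real.sqrt 5 := by nlinarith [Real.sqrt_nonneg 5]
  have h3 : Real.sqrt 5 < 3 := by nlinarith [Real.sqrt_nonneg 5]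
  refine ⟨by rw [hω]; nlinarith, by rw [hω]; linarith, by rw [hω]; linarith⟩

lemma fib_aux_mul (hω : ω = (Real.sqrt 5 - 1) / 2)
    (h0 : q 0 = 1) (h1 : q 1 = 1)
    (hrec : ∀ k : ℕ, q (k + 2) = q (k + 1) + q k) :
    ∀ k : ℕ, (q (k+1) : ℝ) * ω = q k + (-1)^(k+1) * ω^(k+2) := by
  obtain ⟨hsq, hpos, hlt⟩ := fib_aux_omega ω hω
  have H : ∀ k, ((q (k+1) : ℝ) * ω = q k + (-1)^(k+1) * ω^(k+2)) ∧
      ((q (k+2) : ℝ) * ω = q (k+1) + (-1)^(k+2) * ω^(k+3)) := by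
    intro k
    induction k with
    | zero =>
      constructor
      · simp [h0, h1]; nlinarith
      · rw [hrec 0]; push_cast [h0, h1]; ring_nf; nlinarith [hsq]
    | succ n ih =>
      refine ⟨ih.2, ?_⟩
      have h2 := hrec (n+1)
      have hpow : (-1:ℝ)^(n+1) * ω^(n+2) + (-1)^(n+2) * ω^(n+3)
          = (-1)^(n+3) * ω^(n+4) := by
        have h4 : ω^(n+4) = ω^(n+2) * ω^2 := by ring
        rw [h4, hsq]; ring
      have i1 := ih.1
      have i2 := ih.2
      simp only [show n+1+1 = n+2 by omega, show n+1+2 = n+3 by omega,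
        show n+1+3 = n+4 by omega] at *
      push_cast [h2]
      rw [add_mul]
      push_cast at i1 i2
      have h3 : ((q (n+2) : ℝ)) = (q (n+1) : ℝ) + (q n : ℝ) := by exact_mod_cast hrec n
      linarith [hpow, i1, i2, h3]
  exact fun k => (H k).1

/-- Key best-approximation lemma. -/
lemma fib_aux_key (hω : ω = (Real.sqrt 5 - 1) / 2)
    (h0 : q 0 = 1) (h1 : q 1 = 1)
    (hrec : ∀ k : ℕ, q (k + 2) = q (k + 1) + q k) :
    ∀ (j : ℕ) (n m : ℤ), 1 ≤ n → n < (q (j+2) : ℤ) →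
      (-1:ℝ)^(j+1) * ((n:ℝ) * ω - m) ≥ ω^(j+2) ∨
      (-1:ℝ)^(j+1) * ((n:ℝ) * ω - m) ≤ -(1+ω) * ω^(j+2) := by
  obtain ⟨hsq, hpos, hlt⟩ := fib_aux_omega ω hω
  intro j n m hn1 hn2
  have hdet := fib_aux_det q h0 h1 hrec j
  obtain ⟨a, ha⟩ : ∃ a : ℤ, a = (-1)^(j+1) * (n * q (j+1) - m * q (j+2)) := ⟨_, rfl⟩
  obtain ⟨b, hb⟩ : ∃ b : ℤ, b = (-1)^(j+1) * (m * q (j+1) - n * q j) := ⟨_, rfl⟩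
  have hq1 : (1:ℤ) ≤ q j := by exact_mod_cast fib_aux_pos q h0 h1 hrec j
  have hq2 : (1:ℤ) ≤ q (j+1) := by exact_mod_cast fib_aux_pos q h0 h1 hrec (j+1)
  have hq3 : (1:ℤ) ≤ q (j+2) := by exact_mod_cast fib_aux_pos q h0 h1 hrec (j+2)
  have hsign : ((-1:ℤ)^(j+1)) * ((-1:ℤ)^(j+1)) = 1 := by
    rw [← pow_add]; exact Even.neg_one_pow ⟨j+1, by ring⟩
  have hrep_n : a * q (j+1) + b * q (j+2) = n := by
    rw [ha, hb]
    have : (-1:ℤ)^(j+1) * (n * q (j+1) - m * q (j+2)) * q (j+1)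
        + (-1)^(j+1) * (m * q (j+1) - n * q j) * q (j+2)
        = (-1:ℤ)^(j+1) * (n * ((q (j+1):ℤ)^2 - q j * q (j+2))) := by ring
    rw [this]
    have h2 : ((q (j+1):ℤ)^2 - q j * q (j+2)) = (-1)^(j+1) := by
      have : ((-1:ℤ))^(j+1) = -(-1)^j := by ring
      rw [this]; linarith [hdet]
    rw [h2]
    calc (-1:ℤ)^(j+1) * (n * (-1)^(j+1)) = ((-1:ℤ)^(j+1) * (-1)^(j+1)) * n := by ring
    _ = n := by rw [hsign]; ring
  have hrep_m : a * q j + b * q (j+1) = m := by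
    rw [ha, hb]
    have : (-1:ℤ)^(j+1) * (n * q (j+1) - m * q (j+2)) * q j
        + (-1)^(j+1) * (m * q (j+1) - n * q j) * q (j+1)
        = (-1:ℤ)^(j+1) * (m * ((q (j+1):ℤ)^2 - q j * q (j+2))) := by ring
    rw [this]
    have h2 : ((q (j+1):ℤ)^2 - q j * q (j+2)) = (-1)^(j+1) := by
      have : ((-1:ℤ))^(j+1) = -(-1)^j := by ring
      rw [this]; linarith [hdet]
    rw [h2]
    calc (-1:ℤ)^(j+1) * (m * (-1)^(j+1)) = ((-1:ℤ)^(j+1) * (-1)^(j+1)) * m := by ring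
    _ = m := by rw [hsign]; ring
  -- real identity
  have hA1 := fib_aux_mul ω q hω h0 h1 hrec j
  have hA2 := fib_aux_mul ω q hω h0 h1 hrec (j+1)
  have hmain : (-1:ℝ)^(j+1) * ((n:ℝ) * ω - m) = ω^(j+2) * ((a:ℝ) - b * ω) := by
    have hnr : (n:ℝ) = (a:ℝ) * q (j+1) + b * q (j+2) := by exact_mod_cast congrArg (Int.cast : ℤ → ℝ) hrep_n.symm
    have hmr : (m:ℝ) = (a:ℝ) * q j + b * q (j+1) := by exact_mod_cast congrArg (Int.cast : ℤ → ℝ) hrep_m.symm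
    have e1 : (q (j+1) : ℝ) * ω - q j = (-1)^(j+1) * ω^(j+2) := by linarith [hA1]
    have e2 : (q (j+2) : ℝ) * ω - q (j+1) = (-1)^(j+2) * ω^(j+3) := by linarith [hA2]
    have : (n:ℝ) * ω - m = (a:ℝ) * ((q (j+1):ℝ) * ω - q j) + b * ((q (j+2):ℝ) * ω - q (j+1)) := by
      rw [hnr, hmr]; ring
    rw [this, e1, e2]
    have hs : ((-1:ℝ)^(j+1)) * ((-1:ℝ)^(j+1)) = 1 := by
      rw [← pow_add]; exact Even.neg_one_pow ⟨j+1, by ring⟩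
    have h12 : (-1:ℝ)^(j+2) = -(-1:ℝ)^(j+1) := by ring
    have h13 : (ω:ℝ)^(j+3) = ω^(j+2) * ω := by ring
    rw [h12, h13]
    calc (-1:ℝ)^(j+1) * ((a:ℝ) * ((-1)^(j+1) * ω^(j+2)) + (b:ℝ) * (-(-1)^(j+1) * (ω^(j+2)*ω)))
        = ((-1:ℝ)^(j+1) * (-1)^(j+1)) * (ω^(j+2) * ((a:ℝ) - b*ω)) := by ring
      _ = ω^(j+2) * ((a:ℝ) - b*ω) := by rw [hs]; ring
  have hP : (0:ℝ) < ω^(j+2) := pow_pos hpos _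
  -- case analysis
  clear ha hb hdet hsign hA1 hA2
  rcases lt_trichotomy b 0 with hbneg | hbz | hbpos
  · rcases lt_trichotomy a 0 with haneg | haz | hapos
    · exfalso
      have t1 := mul_le_mul_of_nonneg_right (show a ≤ -1 by omega) (show (0:ℤ) ≤ (q (j+1):ℤ) by omega)
      have t2 := mul_le_mul_of_nonneg_right (show b ≤ -1 by omega) (show (0:ℤ) ≤ (q (j+2):ℤ) by omega)
      linarith
    · exfalso
      rw [haz] at hrep_n
      have t2 := mul_le_mul_of_nonneg_right (show b ≤ -1 by omega) (show (0:ℤ) ≤ (q (j+2):ℤ) by omega)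
      linarith
    · -- a ≥ 1, b ≤ -1 : a - bω ≥ 1 + ω
      left
      have ha' : (1:ℝ) ≤ (a:ℝ) := by exact_mod_cast (by omega : (1:ℤ) ≤ a)
      have hb' : (b:ℝ) ≤ -1 := by exact_mod_cast (by omega : b ≤ (-1:ℤ))
      have hbw := mul_le_mul_of_nonneg_right hb' hpos.le
      have hab : (1:ℝ) ≤ (a:ℝ) - b * ω := by linarith
      have := mul_le_mul_of_nonneg_left hab hP.le
      rw [hmain]; linarith
  · rcases lt_trichotomy a 0 with haneg | haz | hapos
    · exfalso
      rw [hbz] at hrep_n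
      have t1 := mul_le_mul_of_nonneg_right (show a ≤ -1 by omega) (show (0:ℤ) ≤ (q (j+1):ℤ) by omega)
      linarith
    · exfalso; rw [hbz, haz] at hrep_n; simp at hrep_n; omega
    · left
      have ha' : (1:ℝ) ≤ (a:ℝ) := by exact_mod_cast (by omega : (1:ℤ) ≤ a)
      have hb0 : ((b:ℝ)) = 0 := by exact_mod_cast hbz
      have := mul_le_mul_of_nonneg_left ha' hP.le
      rw [hmain, hb0]; nlinarith
  · rcases lt_trichotomy a 0 with haneg | haz | hapos
    · -- a ≤ -1, b ≥ 1 : a - bω ≤ -1 - ω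
      right
      have ha' : (a:ℝ) ≤ -1 := by exact_mod_cast (by omega : a ≤ (-1:ℤ))
      have hb' : (1:ℝ) ≤ (b:ℝ) := by exact_mod_cast (by omega : (1:ℤ) ≤ b)
      have hbw := mul_le_mul_of_nonneg_right hb' hpos.le
      have hab : (a:ℝ) - b * ω ≤ -(1 + ω) := by linarith
      have := mul_le_mul_of_nonneg_left hab hP.le
      rw [hmain]; nlinarith
    · exfalso
      rw [haz] at hrep_n
      have t2 := mul_le_mul_of_nonneg_right (show (1:ℤ) ≤ b by omega) (show (0:ℤ) ≤ (q (j+2):ℤ) by omega)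
      linarith
    · exfalso
      have t1 := mul_le_mul_of_nonneg_right (show (1:ℤ) ≤ a by omega) (show (0:ℤ) ≤ (q (j+1):ℤ) by omega)
      have t2 := mul_le_mul_of_nonneg_right (show (1:ℤ) ≤ b by omega) (show (0:ℤ) ≤ (q (j+2):ℤ) by omega)
      linarith

end Aux

/-- The substitution rule (5.2) for the Fibonacci potential
V(n) = ⌊(n+1)ω⌋ − ⌊nω⌋ with ω = (√5−1)/2: V(q_k + n) = V(n) for 1 ≤ n ≤ q_k, k ≥ 3. -/
theorem fibonacci_substitution_rule
    (ω : ℝ) (hω : ω = (Real.sqrt 5 - 1) / 2)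
    (V : ℤ → ℤ) (hV : ∀ n : ℤ, V n = ⌊((n : ℝ) + 1) * ω⌋ - ⌊(n : ℝ) * ω⌋)
    (q : ℕ → ℕ) (h0 : q 0 = 1) (h1 : q 1 = 1)
    (hrec : ∀ k : ℕ, q (k + 2) = q (k + 1) + q k) :
    ∀ k : ℕ, 3 ≤ k → ∀ n : ℤ, 1 ≤ n → n ≤ (q k : ℤ) →
      V ((q k : ℤ) + n) = V n := by
  obtain ⟨hsq, hpos, hlt⟩ := fib_aux_omega ω hω
  intro k hk n hn1 hn2
  obtain ⟨j, rfl⟩ : ∃ j, k = j + 3 := ⟨k - 3, by omega⟩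
  -- key floor shift: for 1 ≤ n ≤ q(j+3)+1, ⌊(q(j+3)+n)ω⌋ = q(j+2) + ⌊nω⌋
  have key : ∀ n : ℤ, 1 ≤ n → n ≤ (q (j+3) : ℤ) + 1 →
      ⌊((q (j+3) : ℝ) + n) * ω⌋ = (q (j+2) : ℤ) + ⌊(n:ℝ) * ω⌋ := by
    intro n hn1 hn2
    have hq2 : (2:ℤ) ≤ q (j+2) := by
      have h := hrec j
      have p1 := fib_aux_pos q h0 h1 hrec j
      have p2 := fib_aux_pos q h0 h1 hrec (j+1)
      omega
    have hnlt : n < (q (j+4) : ℤ) := by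
      have h := hrec (j+2)
      simp only [show j+2+2 = j+4 by omega, show j+2+1 = j+3 by omega] at h
      omega
    have hA := fib_aux_mul ω q hω h0 h1 hrec (j+2)
    simp only [show j+2+1 = j+3 by omega, show j+2+2 = j+4 by omega] at hA
    -- q(j+3) ω = q(j+2) + (-1)^(j+3) ω^(j+4)
    have hPpos : (0:ℝ) < ω^(j+4) := pow_pos hpos _
    set m : ℤ := ⌊(n:ℝ) * ω⌋ with hm
    have hml : (m:ℝ) ≤ (n:ℝ) * ω := Int.floor_le _
    have hmu : (n:ℝ) * ω < m + 1 := Int.lt_floor_add_one _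
    have hKm := fib_aux_key ω q hω h0 h1 hrec (j+2) n m hn1 hnlt
    have hKm1 := fib_aux_key ω q hω h0 h1 hrec (j+2) n (m+1) hn1 hnlt
    simp only [show j+2+1 = j+3 by omega, show j+2+2 = j+4 by omega] at hKm hKm1
    push_cast at hKm1
    have hexp : ((q (j+3) : ℝ) + n) * ω = (n:ℝ) * ω + (-1)^(j+3) * ω^(j+4) + (q (j+2) : ℤ) := by
      push_cast
      rw [add_mul, hA]; push_cast; ring
    rw [hexp, Int.floor_add_intCast, add_comm]
    congr 1
    rw [Int.floor_eq_iff]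
    rcases Nat.even_or_odd (j+3) with hev | hod
    · have hs : (-1:ℝ)^(j+3) = 1 := hev.neg_one_pow
      rw [hs] at hKm hKm1 ⊢
      constructor
      · push_cast; nlinarith
      · rcases hKm1 with h | h
        · push_cast; nlinarith
        · push_cast; nlinarith [mul_pos hpos hPpos]
    · have hs : (-1:ℝ)^(j+3) = -1 := hod.neg_one_pow
      rw [hs] at hKm hKm1 ⊢
      constructor
      · rcases hKm with h | h
        · push_cast; nlinarith
        · push_cast; nlinarith [mul_pos hpos hPpos]
      · push_cast; nlinarith
  have e1 := key n hn1 (by omega)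
  have e2 := key (n+1) (by omega) (by omega)
  rw [hV, hV]
  push_cast at e1 e2 ⊢
  have r1 : ((q (j+3):ℝ) + n + 1) * ω = ((q (j+3):ℝ) + (n+1)) * ω := by ring
  rw [r1, e2]
  rw [show ((q (j+3):ℝ) + n) * ω = ((q (j+3):ℝ) + n) * ω from rfl, e1]
  push_cast
  ring
end
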